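/- arXiv:1604.01583 — 4 statements merged into one kernel-verified Lean document; each statement's English description precedes it below -/
import Mathlib

section
/- Let K = ℚ(√d) with d ≡ 2, 3 (mod 4) squarefree and p an inert prime. Let C ⊆ 𝔽_{p²}^N be a linear code, and let ρ : O_K^N → (O_K/pO_K)^N ≅ 𝔽_{p²}^N be componentwise reduction. If x ∈ ρ^{-1}(C⊥) and y ∈ ρ^{-1}(C), then b_{1/(2p)}(x, y) := (1/(2p)) Σ_{i=1}^N Tr_{K/ℚ}(xᵢyᵢ) ∈ ℤ. In particular, ρ^{-1}(C⊥) is contained in the dual lattice of (ρ^{-1}(C), b_{1/(2p)}). -/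
/-!
Since `C⊥` is orthogonal to `C`, the sum `∑ xᵢ yᵢ` vanishes mod `p`, so it equals `p z` with
`z ∈ 𝓞 K`, and it remains to see that `Tr z` is even. Writing `z = q + r√d`, the integers
`a = Tr z = 2q`, `b = Tr (z√d) = 2dr` and `c = N z = q² - dr²` satisfy `d (a² - 4c) = b²`.
As `d` is squarefree, `b = de`, so `a² ≡ d e² (mod 4)`, which is impossible for odd `a` when
`d ≡ 2, 3 (mod 4)`.
-/

open NumberField Module

/-- The dual code of a linear code `C ⊆ R^ι` with respect to the standard dot product. -/
def dualCode {R : Type*} [CommRing R] {ι : Type*} [Fintype ι]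
    (C : Submodule R (ι → R)) : Submodule R (ι → R) where
  carrier := {x | ∀ y ∈ C, ∑ i, x i * y i = 0}
  zero_mem' := by intro y hy; simp
  add_mem' := by
    intro a b ha hb y hy
    simp only [Pi.add_apply, add_mul, Finset.sum_add_distrib, ha y hy, hb y hy, add_zero]
  smul_mem' := by
    intro c a ha y hy
    simp only [Pi.smul_apply, smul_eq_mul, mul_assoc, ← Finset.mul_sum, ha y hy, mul_zero]

lemma intCast_zmod_four_eq_two_or_three {d : ℤ} (hd : d % 4 = 2 ∨ d % 4 = 3) :
    (d : ZMod 4) = 2 ∨ (d : ZMod 4) = 3 := by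
  rw [← ZMod.intCast_mod d 4]
  rcases hd with h | h <;> simp [h]

lemma not_isSquare_of_emod_four {d : ℤ} (hd : d % 4 = 2 ∨ d % 4 = 3) : ¬IsSquare (d : ℚ) := by
  intro h
  obtain ⟨k, rfl⟩ := Rat.isSquare_intCast_iff.mp h
  have key : ∀ k : ZMod 4, k * k ≠ 2 ∧ k * k ≠ 3 := by decide
  rcases intCast_zmod_four_eq_two_or_three hd with h | h <;> push_cast at h
  exacts [(key k).1 h, (key k).2 h]

lemma two_dvd_of_mul_sub_four_mul_eq_sq {d a b c : ℤ} (hd : Squarefree d)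
    (hdmod : d % 4 = 2 ∨ d % 4 = 3) (h : d * (a ^ 2 - 4 * c) = b ^ 2) : 2 ∣ a := by
  obtain ⟨e, rfl⟩ : d ∣ b := (hd.dvd_pow_iff_dvd two_ne_zero).mp ⟨_, h.symm⟩
  have hd0 : d ≠ 0 := by rintro rfl; simp at hdmod
  have he : a ^ 2 - 4 * c = d * e ^ 2 := mul_left_cancel₀ hd0 (by linear_combination h)
  have hmod : (a : ZMod 4) ^ 2 = d * e ^ 2 := by
    have hcast := congrArg (Int.cast : ℤ → ZMod 4) he
    have hfour : (4 : ZMod 4) = 0 := rfl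
    push_cast at hcast
    linear_combination hcast + (c : ZMod 4) * hfour
  have key : ∀ a d e : ZMod 4, (d = 2 ∨ d = 3) → a ^ 2 = d * e ^ 2 → a ^ 2 = 0 := by decide
  have h4 : (4 : ℤ) ∣ a ^ 2 := by
    exact_mod_cast (ZMod.intCast_zmod_eq_zero_iff_dvd _ 4).mp
      (by push_cast; exact key _ _ _ (intCast_zmod_four_eq_two_or_three hdmod) hmod)
  exact Int.prime_two.dvd_of_dvd_pow (dvd_trans ⟨2, rfl⟩ h4)

section QuadraticBasis

variable {K : Type*} [Field K] [Algebra ℚ K] {d : ℚ} {s : K}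

lemma linearIndependent_one_sqrt (hd : ¬IsSquare d) (hs : s ^ 2 = algebraMap ℚ K d) :
    LinearIndependent ℚ ![(1 : K), s] := by
  rw [LinearIndependent.pair_iff' one_ne_zero]
  rintro c rfl
  apply hd ⟨c, (algebraMap ℚ K).injective ?_⟩
  rw [← hs, map_mul, Algebra.algebraMap_eq_smul_one, sq]

noncomputable def basisOneSqrt (hrank : finrank ℚ K = 2) (hd : ¬IsSquare d)
    (hs : s ^ 2 = algebraMap ℚ K d) : Basis (Fin 2) ℚ K :=
  basisOfLinearIndependentOfCardEqFinrank (linearIndependent_one_sqrt hd hs) (by simp [hrank])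

lemma basisOneSqrt_apply (hrank : finrank ℚ K = 2) (hd : ¬IsSquare d)
    (hs : s ^ 2 = algebraMap ℚ K d) : ⇑(basisOneSqrt hrank hd hs) = ![1, s] :=
  coe_basisOfLinearIndependentOfCardEqFinrank _ _

lemma basisOneSqrt_repr_algebraMap_add_algebraMap_mul (hrank : finrank ℚ K = 2)
    (hd : ¬IsSquare d) (hs : s ^ 2 = algebraMap ℚ K d) (q r : ℚ) :
    (basisOneSqrt hrank hd hs).repr (algebraMap ℚ K q + algebraMap ℚ K r * s) = ![q, r] := by
  have h : algebraMap ℚ K q + algebraMap ℚ K r * s =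
      q • basisOneSqrt hrank hd hs 0 + r • basisOneSqrt hrank hd hs 1 := by
    simp [basisOneSqrt_apply, Algebra.smul_def]
  rw [h]
  ext i
  fin_cases i <;> simp

lemma exists_eq_algebraMap_add_algebraMap_mul (hrank : finrank ℚ K = 2) (hd : ¬IsSquare d)
    (hs : s ^ 2 = algebraMap ℚ K d) (z : K) :
    ∃ q r : ℚ, z = algebraMap ℚ K q + algebraMap ℚ K r * s := by
  refine ⟨(basisOneSqrt hrank hd hs).repr z 0, (basisOneSqrt hrank hd hs).repr z 1, ?_⟩
  conv_lhs => rw [← (basisOneSqrt hrank hd hs).sum_repr z]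
  simp [Fin.sum_univ_two, basisOneSqrt_apply, Algebra.smul_def]

lemma algebraMap_add_algebraMap_mul_mul_self (hs : s ^ 2 = algebraMap ℚ K d) (q r : ℚ) :
    (algebraMap ℚ K q + algebraMap ℚ K r * s) * s =
      algebraMap ℚ K (d * r) + algebraMap ℚ K q * s := by
  rw [map_mul, add_mul, mul_assoc, ← sq, hs]
  ring

lemma leftMulMatrix_basisOneSqrt (hrank : finrank ℚ K = 2) (hd : ¬IsSquare d)
    (hs : s ^ 2 = algebraMap ℚ K d) (q r : ℚ) :
    Algebra.leftMulMatrix (basisOneSqrt hrank hd hs) (algebraMap ℚ K q + algebraMap ℚ K r * s) =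
      !![q, d * r; r, q] := by
  ext i j
  fin_cases j <;>
    simp only [Algebra.leftMulMatrix_eq_repr_mul, basisOneSqrt_apply, Fin.zero_eta, Fin.mk_one,
      Matrix.cons_val_zero, Matrix.cons_val_one, mul_one, algebraMap_add_algebraMap_mul_mul_self hs,
      basisOneSqrt_repr_algebraMap_add_algebraMap_mul] <;>
    fin_cases i <;> rfl

lemma trace_algebraMap_add_algebraMap_mul (hrank : finrank ℚ K = 2) (hd : ¬IsSquare d)
    (hs : s ^ 2 = algebraMap ℚ K d) (q r : ℚ) :
    Algebra.trace ℚ K (algebraMap ℚ K q + algebraMap ℚ K r * s) = 2 * q := by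
  rw [Algebra.trace_eq_matrix_trace (basisOneSqrt hrank hd hs), leftMulMatrix_basisOneSqrt,
    Matrix.trace_fin_two_of, two_mul]

lemma norm_algebraMap_add_algebraMap_mul (hrank : finrank ℚ K = 2) (hd : ¬IsSquare d)
    (hs : s ^ 2 = algebraMap ℚ K d) (q r : ℚ) :
    Algebra.norm ℚ (algebraMap ℚ K q + algebraMap ℚ K r * s) = q ^ 2 - d * r ^ 2 := by
  rw [Algebra.norm_eq_matrix_det (basisOneSqrt hrank hd hs), leftMulMatrix_basisOneSqrt,
    Matrix.det_fin_two_of]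
  ring

end QuadraticBasis

lemma exists_intCast_eq_of_isIntegral {x : ℚ} (hx : IsIntegral ℤ x) : ∃ n : ℤ, (n : ℚ) = x := by
  simpa using IsIntegrallyClosed.isIntegral_iff.mp hx

lemma exists_trace_eq_two_mul_of_isIntegral {K : Type*} [Field K] [NumberField K]
    (hrank : finrank ℚ K = 2) {d : ℤ} (hd : Squarefree d) (hdmod : d % 4 = 2 ∨ d % 4 = 3)
    {s : K} (hs : s ^ 2 = (d : K)) {z : K} (hz : IsIntegral ℤ z) :
    ∃ m : ℤ, Algebra.trace ℚ K z = 2 * m := by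
  have hd' : ¬IsSquare (d : ℚ) := not_isSquare_of_emod_four hdmod
  have hs' : s ^ 2 = algebraMap ℚ K d := by rw [hs, map_intCast]
  have hsint : IsIntegral ℤ s := .of_pow two_pos (hs ▸ isIntegral_algebraMap (x := d))
  obtain ⟨q, r, rfl⟩ := exists_eq_algebraMap_add_algebraMap_mul hrank hd' hs' z
  obtain ⟨a, ha⟩ := exists_intCast_eq_of_isIntegral (Algebra.isIntegral_trace (L := ℚ) hz)
  obtain ⟨b, hb⟩ :=
    exists_intCast_eq_of_isIntegral (Algebra.isIntegral_trace (L := ℚ) (hz.mul hsint))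
  obtain ⟨c, hc⟩ := exists_intCast_eq_of_isIntegral (Algebra.isIntegral_norm ℚ hz)
  rw [trace_algebraMap_add_algebraMap_mul hrank hd' hs'] at ha
  rw [algebraMap_add_algebraMap_mul_mul_self hs',
    trace_algebraMap_add_algebraMap_mul hrank hd' hs'] at hb
  rw [norm_algebraMap_add_algebraMap_mul hrank hd' hs'] at hc
  have key : d * (a ^ 2 - 4 * c) = b ^ 2 := by
    have : ((d * (a ^ 2 - 4 * c) : ℤ) : ℚ) = ((b ^ 2 : ℤ) : ℚ) := by
      push_cast
      rw [ha, hb, hc]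
      ring
    exact_mod_cast this
  obtain ⟨m, rfl⟩ := two_dvd_of_mul_sub_four_mul_eq_sq hd hdmod key
  exact ⟨m, by rw [trace_algebraMap_add_algebraMap_mul hrank hd' hs', ← ha]; push_cast; ring⟩

lemma sum_mul_mem_of_mem_dualCode {R ι : Type*} [CommRing R] [Fintype ι] (I : Ideal R)
    {C : Submodule (R ⧸ I) (ι → R ⧸ I)} {x y : ι → R}
    (hx : (fun i => Ideal.Quotient.mk I (x i)) ∈ dualCode C)
    (hy : (fun i => Ideal.Quotient.mk I (y i)) ∈ C) :
    ∑ i, x i * y i ∈ I := by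
  rw [← Ideal.Quotient.eq_zero_iff_mem, map_sum]
  simpa only [map_mul] using hx _ hy

theorem statement10_general (d : ℤ) (hd : Squarefree d)
    (hdmod : d % 4 = 2 ∨ d % 4 = 3)
    (K : Type*) [Field K] [NumberField K] (hrank : Module.finrank ℚ K = 2)
    (sqrtd : K) (hsqrtd : sqrtd ^ 2 = (d : K))
    (p : ℕ) (hp : p.Prime)
    (N : ℕ) (C : Submodule (𝓞 K ⧸ Ideal.span {(p : 𝓞 K)})
      (Fin N → 𝓞 K ⧸ Ideal.span {(p : 𝓞 K)}))
    (x y : Fin N → 𝓞 K)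
    (hx : (fun i => Ideal.Quotient.mk (Ideal.span {(p : 𝓞 K)}) (x i)) ∈ dualCode C)
    (hy : (fun i => Ideal.Quotient.mk (Ideal.span {(p : 𝓞 K)}) (y i)) ∈ C) :
    ∃ m : ℤ, (1 / (2 * (p : ℚ))) * ∑ i, Algebra.trace ℚ K ((x i : K) * (y i : K))
      = (m : ℚ) := by
  obtain ⟨z, hz⟩ := Ideal.mem_span_singleton'.mp (sum_mul_mem_of_mem_dualCode _ hx hy)
  obtain ⟨m, hm⟩ := exists_trace_eq_two_mul_of_isIntegral hrank hd hdmod hsqrtd z.isIntegral_coe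
  have htrace :
      ∑ i, Algebra.trace ℚ K ((x i : K) * (y i : K)) = p * Algebra.trace ℚ K (z : K) := by
    have hzK := congrArg ((↑) : 𝓞 K → K) hz
    push_cast at hzK
    rw [← map_sum, ← hzK, mul_comm, ← nsmul_eq_mul, map_nsmul, nsmul_eq_mul]
  have hp0 : (p : ℚ) ≠ 0 := by exact_mod_cast hp.ne_zero
  refine ⟨m, ?_⟩
  rw [htrace, hm]
  field_simp

/-- Let `K = ℚ(√d)` with `d > 1` squarefree, `d ≡ 2` or `3 (mod 4)`, and let
`p` be a prime inert in `K`, so `𝒪_K/p𝒪_K ≅ 𝔽_{p²}`.  Let `C` be a linear code in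
`(𝒪_K/p𝒪_K)^N` and `ρ` componentwise reduction mod `p𝒪_K`.  If `x ∈ ρ⁻¹(C⊥)` and
`y ∈ ρ⁻¹(C)` then `b_{1/(2p)}(x, y) = (1/(2p)) ∑ᵢ Tr_{K/ℚ}(xᵢ yᵢ) ∈ ℤ`; in particular
`ρ⁻¹(C⊥)` is contained in the dual lattice of `(ρ⁻¹(C), b_{1/(2p)})`. -/
theorem statement10 (d : ℤ) (hd : Squarefree d) (hd1 : 1 < d)
    (hdmod : d % 4 = 2 ∨ d % 4 = 3)
    (K : Type*) [Field K] [NumberField K] (hrank : Module.finrank ℚ K = 2)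
    (sqrtd : K) (hsqrtd : sqrtd ^ 2 = (d : K))
    (p : ℕ) (hp : p.Prime) (hinert : (Ideal.span {(p : 𝓞 K)}).IsPrime)
    (N : ℕ) (C : Submodule (𝓞 K ⧸ Ideal.span {(p : 𝓞 K)})
      (Fin N → 𝓞 K ⧸ Ideal.span {(p : 𝓞 K)}))
    (x y : Fin N → 𝓞 K)
    (hx : (fun i => Ideal.Quotient.mk (Ideal.span {(p : 𝓞 K)}) (x i)) ∈ dualCode C)
    (hy : (fun i => Ideal.Quotient.mk (Ideal.span {(p : 𝓞 K)}) (y i)) ∈ C) :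
    ∃ m : ℤ, (1 / (2 * (p : ℚ))) * ∑ i, Algebra.trace ℚ K ((x i : K) * (y i : K))
      = (m : ℚ) :=
  statement10_general d hd hdmod K hrank sqrtd hsqrtd p hp N C x y hx hy
end

section
/- Let K = ℚ(√d), d ≡ 1 (mod 4) squarefree, p inert in K, and C ⊆ 𝔽_{p²}^N a self-orthogonal linear code (C ⊆ C⊥). Then the lattice (ρ^{-1}(C), b_{1/p}) with b_{1/p}(x,y) = (1/p) Σ_{i=1}^N Tr_{K/ℚ}(xᵢyᵢ) is integral, i.e. b_{1/p}(x,y) ∈ ℤ for all x, y ∈ ρ^{-1}(C). -/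
set_option synthInstance.maxHeartbeats 1000000
set_option maxHeartbeats 1000000

open NumberField

/-- Let `K = ℚ(√d)` with `d ≡ 1 (mod 4)` squarefree, `p` inert in `K`, and
`C ⊆ (𝒪_K/p𝒪_K)^N ≅ 𝔽_{p²}^N` a self-orthogonal linear code (`C ⊆ C⊥`).  Then the lattice
`(ρ⁻¹(C), b_{1/p})` with `b_{1/p}(x, y) = (1/p) ∑ᵢ Tr_{K/ℚ}(xᵢ yᵢ)` is integral:
`b_{1/p}(x, y) ∈ ℤ` for all `x, y ∈ ρ⁻¹(C)`. -/
theorem statement11 (d : ℤ) (hd : Squarefree d) (hd1 : 1 < d) (hdmod : d % 4 = 1)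
    (K : Type*) [Field K] [NumberField K] (hrank : Module.finrank ℚ K = 2)
    (sqrtd : K) (hsqrtd : sqrtd ^ 2 = (d : K))
    (p : ℕ) (hp : p.Prime) (hinert : (Ideal.span {(p : 𝓞 K)}).IsPrime)
    (N : ℕ) (C : Submodule (𝓞 K ⧸ Ideal.span {(p : 𝓞 K)})
      (Fin N → 𝓞 K ⧸ Ideal.span {(p : 𝓞 K)}))
    (hC : C ≤ dualCode C)
    (x y : Fin N → 𝓞 K)
    (hx : (fun i => Ideal.Quotient.mk (Ideal.span {(p : 𝓞 K)}) (x i)) ∈ C)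
    (hy : (fun i => Ideal.Quotient.mk (Ideal.span {(p : 𝓞 K)}) (y i)) ∈ C) :
    ∃ m : ℤ, (1 / (p : ℚ)) * ∑ i, Algebra.trace ℚ K ((x i : K) * (y i : K)) = (m : ℚ) := by
  have horth := hC hx _ hy
  have hmem : (∑ i, x i * y i) ∈ Ideal.span {(p : 𝓞 K)} := by
    rw [← Ideal.Quotient.eq_zero_iff_mem, map_sum]
    simpa using horth
  obtain ⟨z, hz⟩ := Ideal.mem_span_singleton'.mp hmem
  refine ⟨Algebra.intTrace ℤ (𝓞 K) z, ?_⟩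
  have htr : (∑ i, Algebra.trace ℚ K ((x i : K) * (y i : K)))
      = Algebra.trace ℚ K (((∑ i, x i * y i : 𝓞 K) : K)) := by
    rw [← map_sum]
    push_cast
    rfl
  have hzk : algebraMap ℤ ℚ (Algebra.intTrace ℤ (𝓞 K) z)
      = Algebra.trace ℚ K (algebraMap (𝓞 K) K z) := Algebra.algebraMap_intTrace (A := ℤ) (K := ℚ) (L := K) z
  rw [htr, ← hz]
  have : ((z * (p : 𝓞 K) : 𝓞 K) : K) = (p : ℚ) • (algebraMap (𝓞 K) K z) := by
    push_cast
    rw [Algebra.smul_def]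
    push_cast
    ring
  rw [this, map_smul]
  have hp0 : (p : ℚ) ≠ 0 := Nat.cast_ne_zero.mpr hp.ne_zero
  rw [smul_eq_mul, ← mul_assoc, one_div, inv_mul_cancel₀ hp0, one_mul]
  exact hzk.symm
end

section
/- Let K = ℚ(√(−d)) be an imaginary quadratic field and p a rational prime totally ramified in K, with 𝔭 the unique prime ideal of O_K above p. Let C ⊆ 𝔽_p^N be a linear code and ρ : O_K^N → (O_K/𝔭)^N ≅ 𝔽_p^N componentwise reduction. If x ∈ ρ^{-1}(C⊥) and y ∈ ρ^{-1}(C), then Tr_{K/ℚ}(Σ_{i=1}^N xᵢ ȳᵢ) ∈ pℤ, where ȳᵢ denotes complex conjugation. -/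
/-!
Write `σ` for complex conjugation restricted to `𝓞 K` and `X = ∑ xᵢ σ(yᵢ)`. Since `𝔭² = (p)` and
`σ` fixes `p`, the prime `σ⁻¹(𝔭)` contains `𝔭²`, hence `𝔭`. As `𝓞 K/𝔭` has `p` elements, every
`z ∈ 𝓞 K` is congruent to an integer `n` mod `𝔭`, so `σ z ≡ n ≡ z`. Therefore
`X ≡ ∑ xᵢ yᵢ ≡ 0 (mod 𝔭)`, and the rational integer `Tr X = X + σ X` lies in `𝔭 ∩ ℤ = pℤ`.
-/

set_option synthInstance.maxHeartbeats 1000000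
set_option maxHeartbeats 1000000

open NumberField

lemma charP_of_natCard_eq_prime {R : Type*} [NonAssocRing R] {p : ℕ} [hp : Fact p.Prime]
    (h : Nat.card R = p) : CharP R p := by
  have : Finite R := Nat.finite_of_card_ne_zero (h ▸ hp.out.ne_zero)
  have := Fintype.ofFinite R
  exact charP_of_card_eq_prime (by rwa [← Nat.card_eq_fintype_card])

lemma intCast_surjective_of_natCard_eq_prime {R : Type*} [Ring R] {p : ℕ} [hp : Fact p.Prime]
    (h : Nat.card R = p) : Function.Surjective (Int.cast : ℤ → R) := by
  have := charP_of_natCard_eq_prime h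
  have : Finite R := Nat.finite_of_card_ne_zero (h ▸ hp.out.ne_zero)
  have := Fintype.ofFinite R
  intro r
  obtain ⟨a, rfl⟩ := (ZMod.castHom_bijective R (by rwa [← Nat.card_eq_fintype_card])).surjective r
  obtain ⟨n, rfl⟩ := ZMod.intCast_surjective a
  exact ⟨n, by simp⟩

lemma Ideal.le_comap_of_mul_self_eq_span {R : Type*} [CommRing R] (σ : R →+* R) {P : Ideal R}
    [P.IsPrime] {r : R} (hr : σ r = r) (h : P * P = Ideal.span {r}) : P ≤ P.comap σ := by
  have hrP : r ∈ P := Ideal.mul_le_left (h ▸ Ideal.mem_span_singleton_self r)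
  have hsq : P * P ≤ P.comap σ := by
    rw [h, Ideal.span_le, Set.singleton_subset_iff, SetLike.mem_coe, Ideal.mem_comap, hr]
    exact hrP
  simpa using (Ideal.IsPrime.mul_le inferInstance).mp hsq

lemma Ideal.Quotient.mk_apply_eq_of_le_comap {R : Type*} [CommRing R] {P : Ideal R}
    (σ : R →+* R) (hσ : P ≤ P.comap σ) (hZ : Function.Surjective (Int.cast : ℤ → R ⧸ P))
    (z : R) : Ideal.Quotient.mk P (σ z) = Ideal.Quotient.mk P z := by
  obtain ⟨n, hn⟩ := hZ (Ideal.Quotient.mk P z)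
  have hzn : z - n ∈ P := by
    rw [← Ideal.Quotient.eq_zero_iff_mem, map_sub, ← hn, map_intCast, sub_self]
  refine Ideal.Quotient.eq.mpr ?_
  simpa using P.sub_mem (hσ hzn) hzn

lemma NumberField.natCard_quotient_eq_of_mul_self_eq_span {K : Type*} [Field K] [NumberField K]
    (hrank : Module.finrank ℚ K = 2) {𝔭 : Ideal (𝓞 K)} {p : ℕ}
    (h : 𝔭 * 𝔭 = Ideal.span {(p : 𝓞 K)}) : Nat.card (𝓞 K ⧸ 𝔭) = p := by
  have hnorm := congrArg Ideal.absNorm h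
  rw [map_mul, Ideal.absNorm_span_natCast, RingOfIntegers.rank, hrank, ← sq] at hnorm
  rw [← Submodule.cardQuot_apply, ← Ideal.absNorm_apply]
  exact Nat.pow_left_injective two_ne_zero hnorm

lemma AlgEquiv.ne_one_of_apply_eq_neg {F K : Type*} [Field F] [Field K] [Algebra F K]
    [NeZero (2 : K)] {σ : K ≃ₐ[F] K} {s : K} (hs : s ≠ 0) (hσ : σ s = -s) : σ ≠ 1 := by
  rintro rfl
  rw [AlgEquiv.one_apply] at hσ
  have : (2 : K) * s = 0 := by linear_combination hσ
  exact hs ((mul_eq_zero.mp this).resolve_left two_ne_zero)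

lemma algebraMap_trace_eq_add_of_finrank_eq_two {F K : Type*} [Field F] [Field K] [Algebra F K]
    [FiniteDimensional F K] [IsGalois F K] (hrank : Module.finrank F K = 2) {σ : K ≃ₐ[F] K}
    (hσ : σ ≠ 1) (x : K) : algebraMap F K (Algebra.trace F K x) = x + σ x := by
  classical
  have hne : (1 : K ≃ₐ[F] K) ∉ ({σ} : Finset _) := by simpa using hσ.symm
  have huniv : (Finset.univ : Finset (K ≃ₐ[F] K)) = {1, σ} := by
    refine (Finset.eq_univ_of_card _ ?_).symm
    rw [Finset.card_insert_of_notMem hne, Finset.card_singleton, ← Nat.card_eq_fintype_card,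
      IsGalois.card_aut_eq_finrank, hrank]
  rw [trace_eq_sum_automorphisms, huniv, Finset.sum_insert hne, Finset.sum_singleton]
  rfl

lemma NumberField.RingOfIntegers.intCast_trace_eq_add_galRestrict {K : Type*} [Field K]
    [NumberField K] (hrank : Module.finrank ℚ K = 2) {σ : K ≃ₐ[ℚ] K} (hσ : σ ≠ 1) (x : 𝓞 K) :
    (Algebra.trace ℤ (𝓞 K) x : 𝓞 K) = x + galRestrict ℤ ℚ K (𝓞 K) σ x := by
  -- yields `IsGalois ℚ K` by instance search
  have : Algebra.IsQuadraticExtension ℚ K := ⟨hrank⟩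
  apply RingOfIntegers.coe_injective
  have htr := algebraMap_trace_eq_add_of_finrank_eq_two hrank hσ (x : K)
  rw [← Algebra.coe_trace_int, eq_ratCast, Rat.cast_intCast] at htr
  push_cast
  rw [map_intCast, htr]
  exact congrArg _ (algebraMap_galRestrict_apply ℤ σ x).symm

theorem statement14_general (d : ℤ) (hd0 : 0 < d)
    (K : Type*) [Field K] [NumberField K] (hrank : Module.finrank ℚ K = 2)
    (sqrtd : K) (hsqrtd : sqrtd ^ 2 = -(d : K))
    (conj : K ≃ₐ[ℚ] K) (hconj : conj sqrtd = -sqrtd)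
    (p : ℕ) (hp : p.Prime) (𝔭 : Ideal (𝓞 K)) (h𝔭 : 𝔭.IsPrime)
    (hram : 𝔭 * 𝔭 = Ideal.span {(p : 𝓞 K)})
    (N : ℕ) (C : Submodule (𝓞 K ⧸ 𝔭) (Fin N → 𝓞 K ⧸ 𝔭))
    (x y : Fin N → 𝓞 K)
    (hx : (fun i => Ideal.Quotient.mk 𝔭 (x i)) ∈ dualCode C)
    (hy : (fun i => Ideal.Quotient.mk 𝔭 (y i)) ∈ C) :
    ∃ m : ℤ, Algebra.trace ℚ K (∑ i, (x i : K) * conj (y i : K)) = (p : ℚ) * (m : ℚ) := by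
  have := Fact.mk hp
  set σ := galRestrict ℤ ℚ K (𝓞 K) conj
  have hsqrtd0 : sqrtd ≠ 0 := by
    rintro rfl
    simp [hd0.ne'] at hsqrtd
  have hconj1 : conj ≠ 1 := AlgEquiv.ne_one_of_apply_eq_neg hsqrtd0 hconj
  have hcard := natCard_quotient_eq_of_mul_self_eq_span hrank hram
  have := charP_of_natCard_eq_prime hcard
  have hstable : 𝔭 ≤ 𝔭.comap (σ : 𝓞 K →+* 𝓞 K) :=
    Ideal.le_comap_of_mul_self_eq_span _ (map_natCast σ p) hram
  have hres (z : 𝓞 K) : Ideal.Quotient.mk 𝔭 (σ z) = Ideal.Quotient.mk 𝔭 z :=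
    Ideal.Quotient.mk_apply_eq_of_le_comap _ hstable
      (intCast_surjective_of_natCard_eq_prime hcard) z
  set X : 𝓞 K := ∑ i, x i * σ (y i)
  have hX : X ∈ 𝔭 := by
    rw [← Ideal.Quotient.eq_zero_iff_mem]
    simpa [X, map_sum, map_mul, hres] using hx _ hy
  obtain ⟨m, hm⟩ : (p : ℤ) ∣ Algebra.trace ℤ (𝓞 K) X := by
    rw [← CharP.intCast_eq_zero_iff (𝓞 K ⧸ 𝔭) p, ← map_intCast (Ideal.Quotient.mk 𝔭),
      RingOfIntegers.intCast_trace_eq_add_galRestrict hrank hconj1, Ideal.Quotient.eq_zero_iff_mem]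
    exact 𝔭.add_mem hX (hstable hX)
  refine ⟨m, ?_⟩
  have hXcoe : (X : K) = ∑ i, (x i : K) * conj (y i : K) := by
    simp [X, σ, algebraMap_galRestrict_apply]
  rw [← hXcoe, ← Algebra.coe_trace_int, hm, Int.cast_mul, Int.cast_natCast]

/-- Let `K = ℚ(√-d)` be an imaginary quadratic field (with complex conjugation
`conj` sending `√-d` to `-√-d`) and `p` a rational prime totally ramified in `K`, with `𝔭`
the unique prime above `p` (so `𝔭·𝔭 = p𝒪_K` and `𝒪_K/𝔭 ≅ 𝔽_p`).  Let `C ⊆ (𝒪_K/𝔭)^N` be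
a linear code and `ρ` componentwise reduction mod `𝔭`.  If `x ∈ ρ⁻¹(C⊥)` and `y ∈ ρ⁻¹(C)`,
then `Tr_{K/ℚ}(∑ᵢ xᵢ · conj(yᵢ)) ∈ pℤ`. -/
theorem statement14 (d : ℤ) (hd : Squarefree d) (hd0 : 0 < d)
    (K : Type*) [Field K] [NumberField K] (hrank : Module.finrank ℚ K = 2)
    (sqrtd : K) (hsqrtd : sqrtd ^ 2 = -(d : K))
    (conj : K ≃ₐ[ℚ] K) (hconj : conj sqrtd = -sqrtd)
    (p : ℕ) (hp : p.Prime) (𝔭 : Ideal (𝓞 K)) (h𝔭 : 𝔭.IsPrime)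
    (hram : 𝔭 * 𝔭 = Ideal.span {(p : 𝓞 K)})
    (N : ℕ) (C : Submodule (𝓞 K ⧸ 𝔭) (Fin N → 𝓞 K ⧸ 𝔭))
    (x y : Fin N → 𝓞 K)
    (hx : (fun i => Ideal.Quotient.mk 𝔭 (x i)) ∈ dualCode C)
    (hy : (fun i => Ideal.Quotient.mk 𝔭 (y i)) ∈ C) :
    ∃ m : ℤ, Algebra.trace ℚ K (∑ i, (x i : K) * conj (y i : K)) = (p : ℚ) * (m : ℚ) :=
  statement14_general d hd0 K hrank sqrtd hsqrtd conj hconj p hp 𝔭 h𝔭 hram N C x y hx hy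
end

section
/- Let K = ℚ(√d), d ≡ 2, 3 (mod 4) squarefree, with p inert, and let C ⊆ 𝔽_{p²}^N ≅ (𝔽_p(ω))^N (ω² = d in 𝔽_p) be a self-dual linear code. For a codeword c = s + tω with s, t ∈ {−(p−1)/2, …, (p−1)/2}^N, write ĉ = s + t√d ∈ O_K^N. Then the minimum of the lattice (ρ^{-1}(C), b_{1/(2p)}) equals min{ p, min over nonzero c ∈ C of b_{1/(2p)}(ĉ, ĉ) }, where b_{1/(2p)}(x,y) = (1/(2p)) Σᵢ Tr_{K/ℚ}(xᵢyᵢ). -/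
set_option synthInstance.maxHeartbeats 1000000
set_option maxHeartbeats 1000000

open NumberField

/-!
Since `d ≡ 2, 3 (mod 4)`, `𝓞 K = ℤ[√d]`, and for `x = u + v√d` with `u, v ∈ ℤ^N` the form is
`b(x) = ∑ᵢ (uᵢ² + d vᵢ²) / p`. If `ρ(x) = 0`, then `x = p y` with `y ≠ 0`, so `b(x) = p² b(y) ≥ p`
because `p b(y)` is a positive integer; `p eᵢ` attains `p`. Otherwise `ρ(x)` is a nonzero codeword,
and replacing the coordinates of `u` and `v` by their centered residues mod the odd prime `p` keeps
`ρ(x)` and increases no `uᵢ²` or `vᵢ²`, so `b(x) ≥ μ`; `ĉ` attains `μ`.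
-/

theorem Int.two_mul_abs_bmod_le {m : ℕ} (hm : Odd m) (a : ℤ) : 2 * |a.bmod m| ≤ m - 1 := by
  obtain ⟨k, rfl⟩ := hm
  have h1 := Int.le_bmod (x := a) (m := 2 * k + 1) (by omega)
  have h2 := Int.bmod_le (x := a) (m := 2 * k + 1) (by omega)
  push_cast at *
  cases abs_cases (a.bmod (2 * k + 1)) <;> omega

theorem Int.sq_bmod_le (a : ℤ) (m : ℕ) : (a.bmod m) ^ 2 ≤ a ^ 2 := by
  rcases Nat.eq_zero_or_pos m with rfl | hm
  · simp
  have h1 := Int.le_bmod (x := a) hm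
  have h2 := Int.bmod_lt (x := a) hm
  by_cases ha : -((m : ℤ) / 2) ≤ a ∧ a < ((m : ℤ) + 1) / 2
  · rw [Int.bmod_eq_of_le ha.1 ha.2]
  · rw [sq_le_sq, abs_le]
    constructor <;> cases abs_cases a <;> omega

theorem Rat.exists_eq_intCast_of_squarefree_mul_sq {d : ℤ} (hd : Squarefree d) {r : ℚ} {c : ℤ}
    (h : d * r ^ 2 = c) : ∃ n : ℤ, r = n := by
  refine ⟨r.num, ?_⟩
  have key : d * r.num ^ 2 = c * (r.den : ℤ) ^ 2 := by
    have : (d : ℚ) * r.num ^ 2 = c * (r.den : ℚ) ^ 2 := by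
      rw [← h, ← Rat.mul_den_eq_num]; ring
    exact_mod_cast this
  have hcop : IsCoprime ((r.den : ℤ) ^ 2) (r.num ^ 2) :=
    (Int.isCoprime_iff_gcd_eq_one.mpr (by rw [Int.gcd_comm]; exact_mod_cast r.reduced)).pow
  have hdvd : (r.den : ℤ) * r.den ∣ d := by
    rw [← sq]; exact hcop.dvd_of_dvd_mul_right ⟨c, by rw [key]; ring⟩
  have h1 : r.den = 1 := by
    have := Int.isUnit_iff.mp (hd _ hdvd)
    omega
  rw [← Rat.num_div_den r, h1]; simp

theorem Int.even_of_mul_sq_eq_sq_add {d A B m : ℤ} (hd : d % 4 = 2 ∨ d % 4 = 3)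
    (h : d * B ^ 2 = A ^ 2 + 4 * m) : Even A ∧ Even B := by
  rcases Int.even_or_odd' A with ⟨j, rfl | rfl⟩ <;>
    rcases Int.even_or_odd' B with ⟨k, rfl | rfl⟩
  · exact ⟨even_two_mul j, even_two_mul k⟩
  all_goals exfalso; ring_nf at h; omega

theorem Int.not_isSquare_ratCast_of_squarefree {d : ℤ} (hd : Squarefree d) (hd1 : d ≠ 1) :
    ¬IsSquare (d : ℚ) := by
  rw [Rat.isSquare_intCast_iff]
  rintro ⟨r, rfl⟩
  rcases Int.isUnit_iff.mp (hd r dvd_rfl) with rfl | rfl <;> simp at hd1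

theorem Ideal.Quotient.mk_single_self {R ι : Type*} [CommRing R] [DecidableEq ι] (i : ι) (a : R) :
    (fun j => Ideal.Quotient.mk (Ideal.span {a}) ((Pi.single i a : ι → R) j)) = 0 := by
  funext j
  rw [Pi.zero_apply, Ideal.Quotient.eq_zero_iff_mem, Ideal.mem_span_singleton]
  rcases eq_or_ne j i with rfl | hj <;> simp [*]

namespace QuadraticField

variable {K : Type*} [Field K] [CharZero K] {d : ℤ} {ω : K}

theorem linearIndependent_one_sqrt (hd : ¬IsSquare (d : ℚ)) (hω : ω ^ 2 = d) :
    LinearIndependent ℚ ![1, ω] := by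
  rw [LinearIndependent.pair_iff]
  intro s t hst
  by_cases ht : t = 0
  · subst ht
    simpa using hst
  · refine absurd ⟨-s / t, ?_⟩ hd
    have hωq : ω = ((-s / t : ℚ) : K) := by
      rw [Rat.smul_def, Rat.smul_def] at hst
      push_cast
      field_simp
      linear_combination hst
    apply (Rat.cast_injective (α := K))
    push_cast
    rw [← hω, hωq]; push_cast; ring

variable (hK : Module.finrank ℚ K = 2) (hd : ¬IsSquare (d : ℚ)) (hω : ω ^ 2 = d)
include hK hd hω

noncomputable def basisOneSqrt : Module.Basis (Fin 2) ℚ K :=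
  basisOfLinearIndependentOfCardEqFinrank (linearIndependent_one_sqrt hd hω) (by simp [hK])

theorem basisOneSqrt_zero : basisOneSqrt hK hd hω 0 = 1 := by
  simp [basisOneSqrt]

theorem basisOneSqrt_one : basisOneSqrt hK hd hω 1 = ω := by
  simp [basisOneSqrt]

theorem exists_eq_add_mul_sqrt (y : K) : ∃ a b : ℚ, y = a + b * ω := by
  have := (basisOneSqrt hK hd hω).sum_repr y
  rw [Fin.sum_univ_two, basisOneSqrt_zero, basisOneSqrt_one] at this
  exact ⟨_, _, by rw [← this, Rat.smul_def, Rat.smul_def, mul_one]⟩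

theorem trace_sqrt : Algebra.trace ℚ K ω = 0 := by
  set B := basisOneSqrt hK hd hω
  have h0 : B 0 = 1 := basisOneSqrt_zero hK hd hω
  have h1 : B 1 = ω := basisOneSqrt_one hK hd hω
  rw [Algebra.trace_eq_matrix_trace B, Matrix.trace_fin_two, Algebra.leftMulMatrix_eq_repr_mul,
    Algebra.leftMulMatrix_eq_repr_mul, h0, h1, mul_one, ← h1, B.repr_self, ← sq, h1, hω,
    show (d : K) = (d : ℚ) • B 0 by rw [h0, Rat.smul_def]; simp, map_smul, B.repr_self]
  simp

theorem trace_add_mul_sqrt (a b : ℚ) : Algebra.trace ℚ K (a + b * ω) = 2 * a := by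
  rw [map_add, ← Rat.smul_def, map_smul, trace_sqrt hK hd hω, smul_zero, add_zero,
    ← eq_ratCast (algebraMap ℚ K), Algebra.trace_algebraMap, hK, nsmul_eq_mul, Nat.cast_ofNat]

theorem trace_mul_self_add_mul_sqrt (a b : ℚ) :
    Algebra.trace ℚ K ((a + b * ω) * (a + b * ω)) = 2 * (a ^ 2 + d * b ^ 2) := by
  have : (a + b * ω) * (a + b * ω) = ((a ^ 2 + d * b ^ 2 : ℚ) : K) + (2 * a * b : ℚ) * ω := by
    push_cast
    linear_combination (b : K) ^ 2 * hω
  rw [this, trace_add_mul_sqrt hK hd hω]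

omit hd in
theorem exists_int_eq_add_mul_sqrt_of_isIntegral (hsf : Squarefree d)
    (hd4 : d % 4 = 2 ∨ d % 4 = 3) {y : K} (hy : IsIntegral ℤ y) :
    ∃ a b : ℤ, y = a + b * ω := by
  have hd := Int.not_isSquare_ratCast_of_squarefree hsf (by omega)
  have : FiniteDimensional ℚ K := Module.finite_of_finrank_eq_succ hK
  obtain ⟨q₀, q₁, rfl⟩ := exists_eq_add_mul_sqrt hK hd hω y
  obtain ⟨A, hA⟩ := IsIntegrallyClosed.isIntegral_iff.mp (Algebra.isIntegral_trace (L := ℚ) hy)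
  rw [trace_add_mul_sqrt hK hd hω, algebraMap_int_eq, eq_intCast] at hA
  -- `A = Tr y = 2 q₀` and `m = -Nm y = y ^ 2 - Tr(y) y` are integers, hence so is `B = 2 q₁`,
  -- and `d B² = A² + 4 m` with `d ≡ 2, 3 (mod 4)` forces `A` and `B` to be even
  have hnorm : (q₀ + q₁ * ω) ^ 2 - A * (q₀ + q₁ * ω) = ((d * q₁ ^ 2 - q₀ ^ 2 : ℚ) : K) := by
    rw [show (A : K) = ((A : ℚ) : K) by push_cast; rfl, hA]
    push_cast
    linear_combination (q₁ : K) ^ 2 * hω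
  obtain ⟨m, hm⟩ : ∃ m : ℤ, (m : ℚ) = d * q₁ ^ 2 - q₀ ^ 2 := by
    have hint : IsIntegral ℤ (algebraMap ℚ K (d * q₁ ^ 2 - q₀ ^ 2)) := by
      rw [eq_ratCast, ← hnorm]
      exact (hy.pow 2).sub ((isIntegral_algebraMap (x := A)).mul hy)
    obtain ⟨m, hm⟩ := IsIntegrallyClosed.isIntegral_iff.mp
      ((isIntegral_algebraMap_iff (algebraMap ℚ K).injective).mp hint)
    exact ⟨m, by simpa using hm⟩
  obtain ⟨B, hB⟩ := Rat.exists_eq_intCast_of_squarefree_mul_sq hsf (r := 2 * q₁)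
    (c := A ^ 2 + 4 * m) (by push_cast; rw [hA, hm]; ring)
  have hAB : d * B ^ 2 = A ^ 2 + 4 * m := by
    have : (d * B ^ 2 : ℚ) = A ^ 2 + 4 * m := by rw [← hB, hA, hm]; ring
    exact_mod_cast this
  obtain ⟨⟨j, rfl⟩, ⟨k, rfl⟩⟩ := Int.even_of_mul_sq_eq_sq_add hd4 hAB
  refine ⟨j, k, ?_⟩
  have hq₀ : q₀ = j := by push_cast at hA; linarith
  have hq₁ : q₁ = k := by push_cast at hB; linarith
  rw [hq₀, hq₁]; push_cast; rfl

end QuadraticField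

section TraceForm

variable {K : Type*} [Field K] [NumberField K] (p : ℕ) {N : ℕ}

noncomputable def traceForm (x : Fin N → 𝓞 K) : ℚ :=
  1 / (2 * p) * ∑ i, Algebra.trace ℚ K ((x i : K) * (x i : K))

variable {p} {d : ℤ} {sqrtd : 𝓞 K} (hK : Module.finrank ℚ K = 2) (hω : (sqrtd : K) ^ 2 = d)
include hK

theorem traceForm_single_self (hp : p ≠ 0) (i : Fin N) :
    traceForm p (Pi.single i (p : 𝓞 K)) = p := by
  have : FiniteDimensional ℚ K := Module.finite_of_finrank_eq_succ hK
  have h := Algebra.trace_algebraMap (R := ℚ) (S := K) ((p : ℚ) * p)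
  rw [map_mul, map_natCast, hK] at h
  rw [traceForm, Finset.sum_eq_single i (fun j _ hj => by simp [hj]) (by simp), Pi.single_eq_same]
  push_cast
  rw [h]
  field_simp
  ring

include hω

theorem traceForm_eq_sum_sq (hd : ¬IsSquare (d : ℚ)) (u v : Fin N → ℤ) :
    traceForm p (fun i => (u i : 𝓞 K) + (v i : 𝓞 K) * sqrtd) =
      (∑ i, (u i ^ 2 + d * v i ^ 2) : ℤ) / p := by
  have hterm (i : Fin N) : Algebra.trace ℚ K (((u i : 𝓞 K) + (v i : 𝓞 K) * sqrtd : 𝓞 K) *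
      ((u i : 𝓞 K) + (v i : 𝓞 K) * sqrtd : 𝓞 K)) = 2 * (u i ^ 2 + d * v i ^ 2) := by
    push_cast
    exact_mod_cast QuadraticField.trace_mul_self_add_mul_sqrt hK hd hω (u i) (v i)
  simp only [traceForm, hterm, ← Finset.mul_sum]
  push_cast
  field_simp

variable (hsf : Squarefree d) (hd4 : d % 4 = 2 ∨ d % 4 = 3)
include hsf hd4

theorem exists_int_coords (x : Fin N → 𝓞 K) :
    ∃ u v : Fin N → ℤ, x = fun i => (u i : 𝓞 K) + (v i : 𝓞 K) * sqrtd := by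
  choose u v huv using fun i =>
    QuadraticField.exists_int_eq_add_mul_sqrt_of_isIntegral hK hω hsf hd4 (x i).isIntegral_coe
  exact ⟨u, v, funext fun i => RingOfIntegers.coe_injective (by push_cast; exact huv i)⟩

theorem one_le_mul_traceForm (hd0 : 0 < d) (hp : p ≠ 0) {x : Fin N → 𝓞 K} (hx : x ≠ 0) :
    1 ≤ p * traceForm p x := by
  obtain ⟨u, v, rfl⟩ := exists_int_coords hK hω hsf hd4 x
  obtain ⟨i, hi⟩ := Function.ne_iff.mp hx
  have huv : u i ≠ 0 ∨ v i ≠ 0 := by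
    by_contra! h
    simp [h.1, h.2] at hi
  have hpos : 0 < ∑ j, (u j ^ 2 + d * v j ^ 2) := by
    refine Finset.sum_pos' (fun j _ => by positivity) ⟨i, Finset.mem_univ i, ?_⟩
    rcases huv with h | h <;> positivity
  rw [traceForm_eq_sum_sq hK hω (Int.not_isSquare_ratCast_of_squarefree hsf (by omega)),
    mul_div_cancel₀ _ (by exact_mod_cast hp)]
  exact_mod_cast hpos

theorem le_traceForm_of_forall_dvd (hd0 : 0 < d) (hp : p ≠ 0) {x : Fin N → 𝓞 K} (hx : x ≠ 0)
    (hdvd : ∀ i, (p : 𝓞 K) ∣ x i) :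
    (p : ℚ) ≤ traceForm p x := by
  choose y hy using hdvd
  have hy0 : y ≠ 0 := by
    rintro rfl
    exact hx (funext fun i => by simp [hy i])
  have hxy : traceForm p x = p * (p * traceForm p y) := by
    have hterm (i : Fin N) : Algebra.trace ℚ K (((p * y i : 𝓞 K) : K) * ((p * y i : 𝓞 K) : K)) =
        p ^ 2 * Algebra.trace ℚ K ((y i : K) * (y i : K)) := by
      rw [← smul_eq_mul (a := (p : ℚ) ^ 2), ← map_smul, Rat.smul_def]
      push_cast
      ring_nf
    simp only [traceForm, hy, hterm, ← Finset.mul_sum]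
    ring
  rw [hxy]
  exact le_mul_of_one_le_right p.cast_nonneg (one_le_mul_traceForm hK hω hsf hd4 hd0 hp hy0)

theorem exists_centered_lift_le (hd0 : 0 < d) (hp : Odd p) (x : Fin N → 𝓞 K) :
    ∃ s t : Fin N → ℤ, (∀ i, 2 * |s i| ≤ (p : ℤ) - 1 ∧ 2 * |t i| ≤ (p : ℤ) - 1) ∧
      (fun i => Ideal.Quotient.mk (Ideal.span {(p : 𝓞 K)}) ((s i : 𝓞 K) + (t i : 𝓞 K) * sqrtd)) =
        (fun i => Ideal.Quotient.mk (Ideal.span {(p : 𝓞 K)}) (x i)) ∧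
      traceForm p (fun i => (s i : 𝓞 K) + (t i : 𝓞 K) * sqrtd) ≤ traceForm p x := by
  obtain ⟨u, v, rfl⟩ := exists_int_coords hK hω hsf hd4 x
  refine ⟨fun i => (u i).bmod p, fun i => (v i).bmod p,
    fun i => ⟨Int.two_mul_abs_bmod_le hp _, Int.two_mul_abs_bmod_le hp _⟩, ?_, ?_⟩
  · funext i
    rw [Ideal.Quotient.eq, Ideal.mem_span_singleton]
    obtain ⟨a, ha⟩ := Int.dvd_bmod_sub_self (x := u i) (m := p)
    obtain ⟨b, hb⟩ := Int.dvd_bmod_sub_self (x := v i) (m := p)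
    have ha' := congrArg (Int.cast : ℤ → 𝓞 K) ha
    have hb' := congrArg (Int.cast : ℤ → 𝓞 K) hb
    push_cast at ha' hb'
    exact ⟨a + b * sqrtd, by linear_combination ha' + sqrtd * hb'⟩
  · have hd := Int.not_isSquare_ratCast_of_squarefree hsf (by omega)
    rw [traceForm_eq_sum_sq hK hω hd, traceForm_eq_sum_sq hK hω hd]
    gcongr ((∑ i, ?_ : ℤ) : ℚ) / _ with i
    exact add_le_add (Int.sq_bmod_le _ _) (mul_le_mul_of_nonneg_left (Int.sq_bmod_le _ _) hd0.le)

end TraceForm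

theorem statement17_general (d : ℤ) (hd : Squarefree d) (hd1 : 1 < d)
    (hdmod : d % 4 = 2 ∨ d % 4 = 3)
    (K : Type*) [Field K] [NumberField K] (hrank : Module.finrank ℚ K = 2)
    (sqrtd : 𝓞 K) (hsqrtd : (sqrtd : K) ^ 2 = (d : K))
    (p : ℕ) (hp : p.Prime)
    (N : ℕ) (C : Submodule (𝓞 K ⧸ Ideal.span {(p : 𝓞 K)})
      (Fin N → 𝓞 K ⧸ Ideal.span {(p : 𝓞 K)}))
    (b : (Fin N → 𝓞 K) → ℚ)
    (hb : ∀ x, b x = (1 / (2 * (p : ℚ))) * ∑ i, Algebra.trace ℚ K ((x i : K) * (x i : K)))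
    (μ : ℚ)
    (hμ : IsLeast {q : ℚ | ∃ s t : Fin N → ℤ,
        (∀ i, 2 * |s i| ≤ (p : ℤ) - 1 ∧ 2 * |t i| ≤ (p : ℤ) - 1) ∧
        (fun i => Ideal.Quotient.mk (Ideal.span {(p : 𝓞 K)})
          ((s i : 𝓞 K) + (t i : 𝓞 K) * sqrtd)) ∈ C ∧
        (fun i => Ideal.Quotient.mk (Ideal.span {(p : 𝓞 K)})
          ((s i : 𝓞 K) + (t i : 𝓞 K) * sqrtd)) ≠ 0 ∧
        q = b (fun i => (s i : 𝓞 K) + (t i : 𝓞 K) * sqrtd)} μ) :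
    IsLeast {q : ℚ | ∃ x : Fin N → 𝓞 K, x ≠ 0 ∧
        (fun i => Ideal.Quotient.mk (Ideal.span {(p : 𝓞 K)}) (x i)) ∈ C ∧ q = b x}
      (min (p : ℚ) μ) := by
  obtain rfl : b = traceForm (K := K) p := funext hb
  obtain ⟨⟨s₀, t₀, hcent₀, hmem₀, hne₀, hμ₀⟩, hμ_le⟩ := hμ
  have hd0 : 0 < d := by omega
  have hp0 : p ≠ 0 := hp.ne_zero
  -- modulo 2 the only centered residue is 0, so a nonzero centered codeword forces `p` odd
  have hodd : Odd p := hp.odd_of_ne_two <| by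
    rintro rfl
    have hzero (z : ℤ) (hz : 2 * |z| ≤ ((2 : ℕ) : ℤ) - 1) : z = 0 :=
      abs_eq_zero.mp (by have := abs_nonneg z; push_cast at hz; omega)
    exact hne₀ (funext fun i => by simp [hzero _ (hcent₀ i).1, hzero _ (hcent₀ i).2])
  refine ⟨?_, ?_⟩
  · rcases le_total (p : ℚ) μ with hpμ | hμp
    · obtain ⟨i, -⟩ := Function.ne_iff.mp hne₀
      refine ⟨Pi.single i (p : 𝓞 K), by simp [hp0], ?_, ?_⟩
      · exact (Ideal.Quotient.mk_single_self i (p : 𝓞 K)).symm ▸ C.zero_mem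
      · rw [min_eq_left hpμ, traceForm_single_self hrank hp0]
    · refine ⟨_, fun h => hne₀ ?_, hmem₀, (min_eq_right hμp).trans hμ₀⟩
      funext i
      rw [congrFun h i, Pi.zero_apply, map_zero, Pi.zero_apply]
  · rintro q ⟨x, hx0, hxC, rfl⟩
    by_cases hc : (fun i => Ideal.Quotient.mk (Ideal.span {(p : 𝓞 K)}) (x i)) = 0
    · refine (min_le_left _ _).trans
        (le_traceForm_of_forall_dvd hrank hsqrtd hd hdmod hd0 hp0 hx0 fun i => ?_)
      exact Ideal.mem_span_singleton.mp (Ideal.Quotient.eq_zero_iff_mem.mp (congrFun hc i))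
    · obtain ⟨s, t, hcent, hmk, hle⟩ := exists_centered_lift_le hrank hsqrtd hd hdmod hd0 hodd x
      exact (min_le_right _ _).trans ((hμ_le ⟨s, t, hcent, hmk ▸ hxC, hmk ▸ hc, rfl⟩).trans hle)

/-- Let `K = ℚ(√d)`, `d ≡ 2, 3 (mod 4)` squarefree, `p` inert (so
`𝒪_K = ℤ[√d]` and `𝒪_K/p𝒪_K ≅ 𝔽_{p²} = 𝔽_p(ω)`, `ω = ρ(√d)`), and let
`C ⊆ (𝒪_K/p𝒪_K)^N` be a self-dual linear code.  For a codeword `c = ρ(s + t√d)` with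
centered representatives `s, t ∈ {-(p-1)/2, …, (p-1)/2}^N` write `ĉ = s + t√d ∈ 𝒪_K^N`.
If `μ` is the least value of `b_{1/(2p)}(ĉ, ĉ)` over nonzero codewords `c ∈ C` (with
centered lifts `ĉ`), then the minimum of the lattice `(ρ⁻¹(C), b_{1/(2p)})`,
i.e. the least value of `b_{1/(2p)}(x, x)` over nonzero `x ∈ ρ⁻¹(C)`, equals `min {p, μ}`,
where `b_{1/(2p)}(x, x) = (1/(2p)) ∑ᵢ Tr_{K/ℚ}(xᵢ²)`. -/
theorem statement17 (d : ℤ) (hd : Squarefree d) (hd1 : 1 < d)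
    (hdmod : d % 4 = 2 ∨ d % 4 = 3)
    (K : Type*) [Field K] [NumberField K] (hrank : Module.finrank ℚ K = 2)
    (sqrtd : 𝓞 K) (hsqrtd : (sqrtd : K) ^ 2 = (d : K))
    (p : ℕ) (hp : p.Prime) (hinert : (Ideal.span {(p : 𝓞 K)}).IsPrime)
    (N : ℕ) (C : Submodule (𝓞 K ⧸ Ideal.span {(p : 𝓞 K)})
      (Fin N → 𝓞 K ⧸ Ideal.span {(p : 𝓞 K)}))
    (hC : C = dualCode C)
    (b : (Fin N → 𝓞 K) → ℚ)
    (hb : ∀ x, b x = (1 / (2 * (p : ℚ))) * ∑ i, Algebra.trace ℚ K ((x i : K) * (x i : K)))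
    (μ : ℚ)
    (hμ : IsLeast {q : ℚ | ∃ s t : Fin N → ℤ,
        (∀ i, 2 * |s i| ≤ (p : ℤ) - 1 ∧ 2 * |t i| ≤ (p : ℤ) - 1) ∧
        (fun i => Ideal.Quotient.mk (Ideal.span {(p : 𝓞 K)})
          ((s i : 𝓞 K) + (t i : 𝓞 K) * sqrtd)) ∈ C ∧
        (fun i => Ideal.Quotient.mk (Ideal.span {(p : 𝓞 K)})
          ((s i : 𝓞 K) + (t i : 𝓞 K) * sqrtd)) ≠ 0 ∧
        q = b (fun i => (s i : 𝓞 K) + (t i : 𝓞 K) * sqrtd)} μ) :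
    IsLeast {q : ℚ | ∃ x : Fin N → 𝓞 K, x ≠ 0 ∧
        (fun i => Ideal.Quotient.mk (Ideal.span {(p : 𝓞 K)}) (x i)) ∈ C ∧ q = b x}
      (min (p : ℚ) μ) :=
  statement17_general d hd hd1 hdmod K hrank sqrtd hsqrtd p hp N C b hb μ hμ
end
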